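/- Let m be a positive integer divisible by 4 and x ≥ 0. Define S(x,m) = #{(a,b,c,d)∈ℤ⁴ : c²+d²≤x, a²+b²−c²−d²=m} and A(x,m) = #{(a,b,c,d)∈ℤ⁴ : c²+d²≤x, a²+b²−c²−d²=m, a≡c (mod 2), b≡d (mod 2)}. Then S(x,m) = 2·A(x,m) − S(x/2, m/2). -/

import Mathlib

/-
Squares are 0 or 1 mod 4 according to parity, so when 4 ∣ m every solution has
(a, b) ≡ (c, d) or (a, b) ≡ (d, c) mod 2. Swapping c and d maps the first kind of solution
onto the second, so by inclusion–exclusion S = 2A − #(solutions of both kinds). Those have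
a ≡ b and c ≡ d mod 2, and are exactly the images of the solutions for (x/2, m/2) under
(u, v) ↦ (u + v, u − v), which doubles u² + v².
-/

/-- `S x m` counts integer quadruples `(a,b,c,d)` with `c²+d² ≤ x` and
`a²+b²−c²−d² = m`. -/
noncomputable def S (x : ℝ) (m : ℕ) : ℕ :=
  Nat.card {q : (ℤ × ℤ) × ℤ × ℤ //
    ((q.2.1 ^ 2 + q.2.2 ^ 2 : ℤ) : ℝ) ≤ x ∧
    q.1.1 ^ 2 + q.1.2 ^ 2 - q.2.1 ^ 2 - q.2.2 ^ 2 = (m : ℤ)}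

/-- `A x m` is the subcount of `S x m` where moreover `a ≡ c (mod 2)` and
`b ≡ d (mod 2)`. -/
noncomputable def A (x : ℝ) (m : ℕ) : ℕ :=
  Nat.card {q : (ℤ × ℤ) × ℤ × ℤ //
    ((q.2.1 ^ 2 + q.2.2 ^ 2 : ℤ) : ℝ) ≤ x ∧
    q.1.1 ^ 2 + q.1.2 ^ 2 - q.2.1 ^ 2 - q.2.2 ^ 2 = (m : ℤ) ∧
    (2 : ℤ) ∣ q.1.1 - q.2.1 ∧ (2 : ℤ) ∣ q.1.2 - q.2.2}

open Set

lemma Function.Involutive.ncard_preimage {α : Type*} {f : α → α} (hf : f.Involutive)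
    (s : Set α) : (f ⁻¹' s).ncard = s.ncard := by
  rw [← hf.image_eq_preimage_symm, ncard_image_of_injective s hf.injective]

namespace SqDiffCount

abbrev Quad := (ℤ × ℤ) × ℤ × ℤ

def solutions (x : ℝ) (n : ℤ) : Set Quad :=
  {q | ((q.2.1 ^ 2 + q.2.2 ^ 2 : ℤ) : ℝ) ≤ x ∧
    q.1.1 ^ 2 + q.1.2 ^ 2 - q.2.1 ^ 2 - q.2.2 ^ 2 = n}

def ParityMatched (q : Quad) : Prop :=
  2 ∣ q.1.1 - q.2.1 ∧ 2 ∣ q.1.2 - q.2.2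

def matchedSolutions (x : ℝ) (n : ℤ) : Set Quad := {q ∈ solutions x n | ParityMatched q}

def swapRight (q : Quad) : Quad := (q.1, q.2.swap)

def sumDiff (p : ℤ × ℤ) : ℤ × ℤ := (p.1 + p.2, p.1 - p.2)

lemma S_eq_ncard_solutions (x : ℝ) (m : ℕ) : S x m = (solutions x m).ncard :=
  Nat.card_coe_set_eq _

lemma A_eq_ncard_matchedSolutions (x : ℝ) (m : ℕ) : A x m = (matchedSolutions x m).ncard := by
  rw [← Nat.card_coe_set_eq]
  exact Nat.card_congr (Equiv.subtypeEquivRight fun q => by simp only [matchedSolutions, solutions,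
    ParityMatched, mem_ofPred_eq, and_assoc])

lemma finite_setOf_sq_add_sq_le (N : ℤ) : {p : ℤ × ℤ | p.1 ^ 2 + p.2 ^ 2 ≤ N}.Finite := by
  refine ((finite_Icc (-N) N).prod (finite_Icc (-N) N)).subset fun p hp => ?_
  have mem_Icc_of_sq_add_sq_le {z w : ℤ} (h : z ^ 2 + w ^ 2 ≤ N) : z ∈ Icc (-N) N :=
    abs_le.mp <| calc
      |z| = z.natAbs := Int.abs_eq_natAbs z
      _ ≤ z ^ 2 := Int.natAbs_le_self_sq z
      _ ≤ N := by linarith [sq_nonneg w]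
  exact ⟨mem_Icc_of_sq_add_sq_le hp, mem_Icc_of_sq_add_sq_le ((add_comm _ _).trans_le hp)⟩

lemma finite_solutions (x : ℝ) (n : ℤ) : (solutions x n).Finite := by
  refine ((finite_setOf_sq_add_sq_le (n + ⌈x⌉)).prod (finite_setOf_sq_add_sq_le ⌈x⌉)).subset
    fun q hq => ?_
  have hcd : q.2.1 ^ 2 + q.2.2 ^ 2 ≤ ⌈x⌉ := by exact_mod_cast hq.1.trans (Int.le_ceil x)
  have hab : q.1.1 ^ 2 + q.1.2 ^ 2 - q.2.1 ^ 2 - q.2.2 ^ 2 = n := hq.2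
  exact ⟨show q.1.1 ^ 2 + q.1.2 ^ 2 ≤ n + ⌈x⌉ by linarith, hcd⟩

lemma swapRight_involutive : Function.Involutive swapRight := fun _ => rfl

lemma swapRight_mem_solutions {x : ℝ} {n : ℤ} {q : Quad} :
    swapRight q ∈ solutions x n ↔ q ∈ solutions x n := by
  simp only [solutions, swapRight, Prod.fst_swap, Prod.snd_swap, mem_ofPred_eq,
    add_comm (q.2.2 ^ 2), sub_right_comm _ (q.2.2 ^ 2)]

lemma sq_emod_four (a : ℤ) : a ^ 2 % 4 = a % 2 := by
  rcases Int.even_or_odd' a with ⟨k, rfl | rfl⟩ <;> ring_nf <;> omega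

lemma parityMatched_or_swapRight {q : Quad}
    (h : 4 ∣ q.1.1 ^ 2 + q.1.2 ^ 2 - q.2.1 ^ 2 - q.2.2 ^ 2) :
    ParityMatched q ∨ ParityMatched (swapRight q) := by
  have := sq_emod_four q.1.1
  have := sq_emod_four q.1.2
  have := sq_emod_four q.2.1
  have := sq_emod_four q.2.2
  simp only [ParityMatched, swapRight, Prod.fst_swap, Prod.snd_swap]
  omega

lemma parityMatched_and_swapRight_iff {q : Quad}
    (h : 4 ∣ q.1.1 ^ 2 + q.1.2 ^ 2 - q.2.1 ^ 2 - q.2.2 ^ 2) :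
    ParityMatched q ∧ ParityMatched (swapRight q) ↔
      2 ∣ q.1.1 - q.1.2 ∧ 2 ∣ q.2.1 - q.2.2 := by
  have := sq_emod_four q.1.1
  have := sq_emod_four q.1.2
  have := sq_emod_four q.2.1
  have := sq_emod_four q.2.2
  simp only [ParityMatched, swapRight, Prod.fst_swap, Prod.snd_swap]
  omega

lemma matchedSolutions_union_preimage_swapRight {x : ℝ} {n : ℤ} (hn : 4 ∣ n) :
    matchedSolutions x n ∪ swapRight ⁻¹' matchedSolutions x n = solutions x n := by
  refine Subset.antisymm (union_subset (sep_subset _ _) fun q hq => swapRight_mem_solutions.mp hq.1)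
    fun q hq => ?_
  have h4 : 4 ∣ q.1.1 ^ 2 + q.1.2 ^ 2 - q.2.1 ^ 2 - q.2.2 ^ 2 := hq.2 ▸ hn
  exact (parityMatched_or_swapRight h4).imp (fun h => ⟨hq, h⟩)
    fun h => ⟨swapRight_mem_solutions.mpr hq, h⟩

lemma sumDiff_injective : Function.Injective sumDiff := by
  intro p p' h
  simp only [sumDiff, Prod.mk.injEq] at h
  ext <;> omega

lemma range_sumDiff : range sumDiff = {p | 2 ∣ p.1 - p.2} := by
  ext p
  rw [mem_ofPred_eq]
  refine ⟨?_, fun h => ⟨((p.1 + p.2) / 2, (p.1 - p.2) / 2), ?_⟩⟩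
  · rintro ⟨u, rfl⟩
    exact ⟨u.2, by simp only [sumDiff]; ring⟩
  · simp only [sumDiff]
    ext <;> omega

lemma sq_add_sq_sumDiff (p : ℤ × ℤ) :
    (sumDiff p).1 ^ 2 + (sumDiff p).2 ^ 2 = 2 * (p.1 ^ 2 + p.2 ^ 2) := by
  simp only [sumDiff]; ring

lemma preimage_sumDiff_solutions (x : ℝ) (k : ℤ) :
    Prod.map sumDiff sumDiff ⁻¹' solutions x (2 * k) = solutions (x / 2) k := by
  ext q
  simp only [solutions, mem_preimage, mem_ofPred_eq, Prod.map_fst, Prod.map_snd, sub_sub,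
    sq_add_sq_sumDiff, ← mul_sub]
  push_cast
  exact and_congr (le_div_iff₀' two_pos).symm (mul_right_inj' two_ne_zero)

lemma image_sumDiff_solutions (x : ℝ) (k : ℤ) :
    Prod.map sumDiff sumDiff '' solutions (x / 2) k =
      solutions x (2 * k) ∩ range (Prod.map sumDiff sumDiff) := by
  rw [← preimage_sumDiff_solutions, image_preimage_eq_inter_range]

lemma matchedSolutions_inter_preimage_swapRight {x : ℝ} {n : ℤ} (hn : 4 ∣ n) :
    matchedSolutions x n ∩ swapRight ⁻¹' matchedSolutions x n =
      solutions x n ∩ range (Prod.map sumDiff sumDiff) := by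
  ext q
  simp only [matchedSolutions, mem_inter_iff, mem_preimage, swapRight_mem_solutions, range_prodMap,
    range_sumDiff, mem_prod, mem_ofPred_eq]
  constructor
  · rintro ⟨⟨hq, h⟩, -, h'⟩
    exact ⟨hq, (parityMatched_and_swapRight_iff (hq.2 ▸ hn)).mp ⟨h, h'⟩⟩
  · rintro ⟨hq, h⟩
    obtain ⟨h, h'⟩ := (parityMatched_and_swapRight_iff (hq.2 ▸ hn)).mpr h
    exact ⟨⟨hq, h⟩, hq, h'⟩

end SqDiffCount

open SqDiffCount in
theorem stmt_3_general (m : ℕ) (h4 : 4 ∣ m) (x : ℝ) :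
    (S x m : ℤ) = 2 * (A x m : ℤ) - (S (x / 2) (m / 2) : ℤ) := by
  have hm4 : (4 : ℤ) ∣ m := by exact_mod_cast h4
  have hm2 : 2 * ((m / 2 : ℕ) : ℤ) = m := by omega
  have hfin : (matchedSolutions x m).Finite := (finite_solutions x m).subset (sep_subset _ _)
  have hcount := ncard_union_add_ncard_inter (matchedSolutions x m)
    (swapRight ⁻¹' matchedSolutions x m)
    hfin (hfin.preimage swapRight_involutive.injective.injOn)
  rw [matchedSolutions_union_preimage_swapRight hm4, matchedSolutions_inter_preimage_swapRight hm4,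
    swapRight_involutive.ncard_preimage] at hcount
  have hhalf : (solutions x m ∩ range (Prod.map sumDiff sumDiff)).ncard = S (x / 2) (m / 2) := by
    rw [S_eq_ncard_solutions, ← ncard_image_of_injective (solutions _ _)
      (sumDiff_injective.prodMap sumDiff_injective), image_sumDiff_solutions, hm2]
  rw [S_eq_ncard_solutions, A_eq_ncard_matchedSolutions]
  omega

theorem stmt_3 (m : ℕ) (hm : 0 < m) (h4 : 4 ∣ m) (x : ℝ) (hx : 0 ≤ x) :
    (S x m : ℤ) = 2 * (A x m : ℤ) - (S (x / 2) (m / 2) : ℤ) :=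
  stmt_3_general m h4 x
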